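/- Let $G$ be a directed multigraph and let $c: \mathcal M_G \to \mathbb R$ be an additive ($\mathbb Z$-linear) map on the group $\mathcal M_G$ of formal cycles such that $c(\mathcal C) > -|\mathcal C|$ for every simple directed cycle $\mathcal C$, where $|\mathcal C|$ is the number of edges of $\mathcal C$. Then $c$ extends to a $\mathbb Z$-linear map $c: \mathbb Z^{E(G)} \to \mathbb R$ with $c(e) > -1$ for every edge $e \in E(G)$. -/

import Mathlib

open Classical in
/-- `c : Fin (k+1) → ε` is a simple directed cycle in the multigraph with source and target
maps `s, t`. -/
def IsCycleFun {V ε : Type*} (s t : ε → V) (k : ℕ) (c : Fin (k + 1) → ε) : Prop :=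
  Function.Injective c ∧ (∀ i : Fin (k + 1), t (c i) = s (c (i + 1))) ∧
    Function.Injective fun i => s (c i)

open Classical in
/-- The characteristic vector (in `ℤ^{E(G)}`) of a simple directed cycle. -/
noncomputable def cycChi {ε : Type*} {k : ℕ} (c : Fin (k + 1) → ε) : ε → ℤ :=
  fun e => if ∃ i, c i = e then 1 else 0

/-!
Extend `f` arbitrarily to a homomorphism `h : ℤ^E → ℝ` (ℝ is divisible) and put
`u e = h e + 1`; then every simple cycle has positive `u`-weight `f(𝒞) + |𝒞|`. It suffices to
find `l` vanishing on every cycle with `u + l > 0`, for then `g = h + ⟨l, ·⟩` works.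
If there were none, separating the open set `{l | u + l > 0}` from the subspace `L` of vectors
vanishing on cycles would give a nonzero `y ≥ 0` orthogonal to `L` with `⟨y, u⟩ ≤ 0`.
Coboundaries `p ∘ t - p ∘ s` vanish on cycles, so `y` is a nonnegative circulation; peeling
simple cycles off its support writes it as a positive combination of cycles, so `⟨y, u⟩ > 0`.
-/

open Finset

theorem LinearMap.eq_zero_of_forall_le_of_mem {𝕜 E : Type*} [Field 𝕜] [LinearOrder 𝕜]
    [IsStrictOrderedRing 𝕜] [AddCommGroup E] [Module 𝕜 E] (φ : E →ₗ[𝕜] 𝕜)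
    {L : Submodule 𝕜 E} {a : 𝕜} (h : ∀ x ∈ L, a ≤ φ x) {x : E} (hx : x ∈ L) : φ x = 0 := by
  by_contra hφx
  have := h _ (L.smul_mem ((a - 1) / φ x) hx)
  rw [map_smul, smul_eq_mul, div_mul_cancel₀ _ hφx] at this
  linarith

section Alternative

variable {ι : Type*} [Fintype ι]

theorem nonneg_of_forall_pos_lt_sum_mul {y : ι → ℝ} {a : ℝ}
    (h : ∀ p : ι → ℝ, (∀ i, 0 < p i) → a < ∑ i, y i * p i) : 0 ≤ y := by
  classical
  intro i
  by_contra! hi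
  obtain ⟨n, hn⟩ := exists_lt_nsmul (neg_pos.2 hi) (∑ j, y j - a)
  have := h (1 + n • Pi.single i 1) fun j => by
    rcases eq_or_ne j i with rfl | hj <;> simp [*]
    positivity
  simp [mul_add, sum_add_distrib, Pi.single_apply, nsmul_eq_mul] at this hn
  linarith

theorem nonpos_of_forall_pos_lt_sum_mul {y : ι → ℝ} {a : ℝ}
    (h : ∀ p : ι → ℝ, (∀ i, 0 < p i) → a < ∑ i, y i * p i) : a ≤ 0 := by
  by_contra! ha
  have hy : a < ∑ i, y i := by simpa using h 1 fun _ => one_pos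
  have := h (fun _ => a / ∑ i, y i) fun _ => div_pos ha (ha.trans hy)
  rw [← sum_mul, mul_div_cancel₀ _ (ha.trans hy).ne'] at this
  exact this.false

theorem Submodule.exists_forall_pos_add_of_forall_orthogonal_pos (L : Submodule ℝ (ι → ℝ))
    (u : ι → ℝ) (h : ∀ y : ι → ℝ, 0 ≤ y → y ≠ 0 → (∀ l ∈ L, ∑ i, y i * l i = 0) →
      0 < ∑ i, y i * u i) :
    ∃ l ∈ L, ∀ i, 0 < u i + l i := by
  classical
  by_contra! hL
  set A := (u + ·) ⁻¹' Set.univ.pi fun _ => Set.Ioi (0 : ℝ)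
  have hA : Convex ℝ A := (convex_pi fun _ _ => convex_Ioi 0).translate_preimage_right u
  have hAo : IsOpen A := (isOpen_set_pi Set.finite_univ fun _ _ => isOpen_Ioi).preimage
    (continuous_const.add continuous_id)
  have hAL : Disjoint A L := Set.disjoint_left.2 fun l hlA hlL => by
    obtain ⟨i, hi⟩ := hL l hlL
    exact hi.not_gt (hlA i (Set.mem_univ i))
  obtain ⟨φ, a, hφA, hφL⟩ := geometric_hahn_banach_open hA hAo L.convex hAL
  set y : ι → ℝ := fun i => -φ (Pi.single i 1)
  have hφ : ∀ x, φ x = -∑ i, y i * x i := fun x => by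
    conv_lhs => rw [← univ_sum_single x]
    simp only [y, map_sum, neg_mul, sum_neg_distrib, neg_neg]
    congr! 1 with i
    rw [mul_comm, ← smul_eq_mul, ← map_smul, ← Pi.single_smul', smul_eq_mul, mul_one]
  have hφL0 : ∀ l ∈ L, φ l = 0 := fun _ => φ.toLinearMap.eq_zero_of_forall_le_of_mem hφL
  have hyu : ∀ p : ι → ℝ, (∀ i, 0 < p i) → ∑ i, y i * u i < ∑ i, y i * p i := by
    intro p hp
    have hpu := hφA (p - u) (by simpa [A] using hp)
    have h0 := hφL 0 L.zero_mem
    simp only [hφ, Pi.sub_apply, mul_sub, sum_sub_distrib, Pi.zero_apply,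
      mul_zero, sum_const_zero] at hpu h0
    linarith
  refine (h y (nonneg_of_forall_pos_lt_sum_mul hyu) ?_ fun l hl => ?_).not_ge
    (nonpos_of_forall_pos_lt_sum_mul hyu)
  · intro hy
    simpa [hy] using hyu 1 fun _ => one_pos
  · simpa [hφ] using hφL0 l hl

end Alternative

section Circulations

variable {V ε : Type*} {s t : ε → V}

theorem IsCycleFun.sum_sub_eq_zero {R : Type*} [AddCommGroup R] {k : ℕ} {c : Fin (k + 1) → ε}
    (hc : IsCycleFun s t k c) (p : V → R) : ∑ i, (p (t (c i)) - p (s (c i))) = 0 := by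
  rw [sum_sub_distrib, sub_eq_zero]
  simp_rw [hc.2.1]
  exact Fintype.sum_equiv (Equiv.addRight 1) _ _ fun _ => rfl

theorem cycChi_eq_sum_single [DecidableEq ε] {k : ℕ} {c : Fin (k + 1) → ε}
    (hc : Function.Injective c) : cycChi c = ∑ i, Pi.single (c i) 1 := by
  ext e
  rw [Finset.sum_apply]
  simp_rw [Pi.single_comm _ (1 : ℤ)]
  rw [← sum_image (f := Pi.single e (1 : ℤ)) fun i _ j _ h => hc h, sum_pi_single']
  simp [cycChi]

theorem sum_cycChi_mul [Fintype ε] {k : ℕ} {c : Fin (k + 1) → ε} (hc : Function.Injective c)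
    (g : ε → ℝ) : ∑ e, (cycChi c e : ℝ) * g e = ∑ i, g (c i) := by
  classical
  simp only [cycChi_eq_sum_single hc, Finset.sum_apply, Int.cast_sum, sum_mul]
  rw [sum_comm]
  simp [Pi.single_apply]

variable (s t) in
def cycleAnnihilator : Submodule ℝ (ε → ℝ) where
  carrier := {w | ∀ k c, IsCycleFun s t k c → ∑ i, w (c i) = 0}
  add_mem' ha hb k c hc := by simp [sum_add_distrib, ha k c hc, hb k c hc]
  zero_mem' k c hc := by simp
  smul_mem' r w hw k c hc := by simp [← mul_sum, hw k c hc]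

theorem coboundary_mem_cycleAnnihilator (p : V → ℝ) :
    (fun e => p (t e) - p (s e)) ∈ cycleAnnihilator s t := fun _ _ hc => hc.sum_sub_eq_zero p

open Function in
theorem exists_isCycleFun_of_forall_exists_succ [Finite V] (P : ε → Prop) {e₀ : ε} (he₀ : P e₀)
    (hP : ∀ e, P e → ∃ e', P e' ∧ s e' = t e) :
    ∃ k c, IsCycleFun s t k c ∧ ∀ i, P (c i) := by
  classical
  -- `φ` leaves each vertex of `S` along an edge of `P`; a periodic orbit of `φ` is a simple cycle.
  let S : Set V := {v | ∃ e, P e ∧ s e = v}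
  let out : V → ε := fun v => if h : v ∈ S then h.choose else e₀
  have hout : ∀ v ∈ S, P (out v) ∧ s (out v) = v := fun v hv => by
    simpa [out, hv] using hv.choose_spec
  let φ : V → V := fun v => t (out v)
  have hφS : ∀ v ∈ S, φ v ∈ S := fun v hv => hP _ (hout v hv).1
  have horbit : ∀ n, φ^[n] (s e₀) ∈ S := fun n => by
    induction n with
    | zero => exact ⟨e₀, he₀, rfl⟩
    | succ n ih => rw [iterate_succ_apply']; exact hφS _ ih
  obtain ⟨v₀, hv₀S, hv₀⟩ : ∃ v₀ ∈ S, 0 < minimalPeriod φ v₀ := by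
    obtain ⟨m, n, hmn, heq⟩ := Finite.exists_ne_map_eq_of_infinite fun n => φ^[n] (s e₀)
    wlog hlt : m < n generalizing m n
    · exact this n m hmn.symm heq.symm (by omega)
    refine ⟨_, horbit m, IsPeriodicPt.minimalPeriod_pos (n := n - m) (by omega) ?_⟩
    rw [IsPeriodicPt, IsFixedPt, ← iterate_add_apply, Nat.sub_add_cancel hlt.le]
    exact heq.symm
  obtain ⟨k, hk⟩ := Nat.exists_eq_add_one_of_ne_zero hv₀.ne'
  have hS : ∀ n, φ^[n] v₀ ∈ S := fun n => by
    induction n with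
    | zero => exact hv₀S
    | succ n ih => rw [iterate_succ_apply']; exact hφS _ ih
  have hs : ∀ n, s (out (φ^[n] v₀)) = φ^[n] v₀ := fun n => (hout _ (hS n)).2
  have hsinj : Injective fun i : Fin (k + 1) => s (out (φ^[i] v₀)) := fun i j hij => by
    simp only [hs] at hij
    exact Fin.ext <| iterate_injOn_Iio_minimalPeriod (by simp [hk, i.is_le]) (by simp [hk, j.is_le])
      hij
  refine ⟨k, fun i => out (φ^[i] v₀), ⟨hsinj.of_comp, fun i => ?_, hsinj⟩,
    fun i => (hout _ (hS i)).1⟩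
  change φ (φ^[i] v₀) = s (out (φ^[(i + 1 : Fin (k + 1))] v₀))
  rw [hs, ← iterate_succ_apply' φ, ← iterate_mod_minimalPeriod_eq, hk, Fin.val_add,
    Fin.val_one', Nat.add_mod_mod]

variable [Fintype ε]

-- Flow conservation at every vertex, phrased as orthogonality to all coboundaries.
variable (s t) in
def circulations : Submodule ℝ (ε → ℝ) where
  carrier := {w | ∀ p : V → ℝ, ∑ e, w e * (p (t e) - p (s e)) = 0}
  add_mem' ha hb p := by simp [add_mul, sum_add_distrib, ha p, hb p]
  zero_mem' p := by simp
  smul_mem' r w hw p := by simp [mul_assoc, ← mul_sum, hw p]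

theorem IsCycleFun.cycChi_mem_circulations {k : ℕ} {c : Fin (k + 1) → ε}
    (hc : IsCycleFun s t k c) : (fun e => (cycChi c e : ℝ)) ∈ circulations s t := fun p => by
  rw [sum_cycChi_mul hc.1, hc.sum_sub_eq_zero]

theorem exists_pos_succ_of_mem_circulations {w : ε → ℝ} (hw : w ∈ circulations s t)
    (hw0 : 0 ≤ w) {e : ε} (he : 0 < w e) : ∃ e', 0 < w e' ∧ s e' = t e := by
  classical
  by_contra! hout
  have hflow := hw fun v => if v = t e then 1 else 0
  simp only [mul_sub, sum_sub_distrib, sub_eq_zero] at hflow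
  have hin : 0 < ∑ e', w e' * if t e' = t e then 1 else 0 :=
    sum_pos' (fun e' _ => mul_nonneg (hw0 e') (by split_ifs <;> norm_num))
      ⟨e, mem_univ e, by simpa using he⟩
  have hout : ∑ e', (w e' * if s e' = t e then 1 else 0) = 0 := sum_eq_zero fun e' _ => by
    split_ifs with h
    · simpa using le_antisymm (not_lt.1 fun h' => hout e' h' h) (hw0 e')
    · simp
  exact hin.ne' (hflow.trans hout)

theorem exists_isCycleFun_pos_of_mem_circulations [Finite V] {w : ε → ℝ}
    (hw : w ∈ circulations s t) (hw0 : 0 ≤ w) (hne : w ≠ 0) :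
    ∃ k c, IsCycleFun s t k c ∧ ∀ i, 0 < w (c i) := by
  obtain ⟨e₀, he₀⟩ := Function.ne_iff.1 hne
  exact exists_isCycleFun_of_forall_exists_succ (fun e => 0 < w e) ((hw0 e₀).lt_of_ne' he₀)
    fun e he => exists_pos_succ_of_mem_circulations hw hw0 he

theorem sum_mul_pos_of_mem_circulations [Finite V] {u : ε → ℝ}
    (hu : ∀ k c, IsCycleFun s t k c → 0 < ∑ i, u (c i)) {w : ε → ℝ}
    (hw : w ∈ circulations s t) (hw0 : 0 ≤ w) (hne : w ≠ 0) : 0 < ∑ e, w e * u e := by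
  classical
  induction hn : #{e | w e ≠ 0} using Nat.strong_induction_on generalizing w with
  | _ n ih => ?_
  obtain ⟨k, c, hc, hpos⟩ := exists_isCycleFun_pos_of_mem_circulations hw hw0 hne
  -- Subtracting the cycle, weighted by the least value of `w` on it, shrinks the support.
  obtain ⟨i₀, -, hi₀⟩ := exists_min_image univ (fun i => w (c i)) univ_nonempty
  set w' := w - w (c i₀) • fun e => (cycChi c e : ℝ)
  have hw'_apply : ∀ e, w' e = if ∃ i, c i = e then w e - w (c i₀) else w e := fun e => by
    split_ifs with he <;> simp [w', cycChi, he]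
  have hw' : w' ∈ circulations s t :=
    sub_mem hw (Submodule.smul_mem _ _ hc.cycChi_mem_circulations)
  have hw'0 : 0 ≤ w' := fun e => by
    rw [hw'_apply]
    split_ifs with he
    · obtain ⟨i, rfl⟩ := he
      simpa using hi₀ i (mem_univ i)
    · exact hw0 e
  have hsupp : #{e | w' e ≠ 0} < n := by
    refine hn ▸ card_lt_card ((ssubset_iff_of_subset fun e => ?_).2 ⟨c i₀, ?_⟩)
    · simp only [mem_filter, mem_univ, true_and, hw'_apply]
      split_ifs with he
      · obtain ⟨i, rfl⟩ := he
        exact fun _ => (hpos i).ne'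
      · exact id
    · simp [hw'_apply, (hpos i₀).ne']
  have hw'u : 0 ≤ ∑ e, w' e * u e := by
    rcases eq_or_ne w' 0 with h | h
    · simp [h]
    · exact (ih _ hsupp hw' hw'0 h rfl).le
  have hsplit : ∑ e, w e * u e = ∑ e, w' e * u e + w (c i₀) * ∑ i, u (c i) := by
    simp [w', sub_mul, sum_sub_distrib, mul_assoc, ← mul_sum, sum_cycChi_mul hc.1]
  rw [hsplit]
  linarith [mul_pos (hpos i₀) (hu k c hc)]

theorem exists_mem_cycleAnnihilator_forall_pos_add [Finite V] {u : ε → ℝ}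
    (hu : ∀ k c, IsCycleFun s t k c → 0 < ∑ i, u (c i)) :
    ∃ l ∈ cycleAnnihilator s t, ∀ e, 0 < u e + l e :=
  (cycleAnnihilator s t).exists_forall_pos_add_of_forall_orthogonal_pos u
    fun _ hy0 hy hyL => sum_mul_pos_of_mem_circulations hu
      (fun p => hyL _ (coboundary_mem_cycleAnnihilator p)) hy0 hy

end Circulations

open Classical in
/-- An additive map on the group `M_G` of formal cycles with `c(𝒞) > -|𝒞|` on every simple
directed cycle `𝒞` extends to an additive map on `ℤ^{E(G)}` with `c(e) > -1` on every edge. -/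
theorem stmt13 (V ε : Type) [Fintype V] [Fintype ε] (s t : ε → V)
    (M : AddSubgroup (ε → ℤ))
    (hM : M = AddSubgroup.closure
      {x : ε → ℤ | ∃ (k : ℕ) (c : Fin (k + 1) → ε), IsCycleFun s t k c ∧ x = cycChi c})
    (f : M →+ ℝ)
    (hf : ∀ (x : ε → ℤ) (hx : x ∈ M) (k : ℕ) (c : Fin (k + 1) → ε),
      IsCycleFun s t k c → x = cycChi c → -((k : ℝ) + 1) < f ⟨x, hx⟩) :
    ∃ g : (ε → ℤ) →+ ℝ,
      (∀ (x : ε → ℤ) (hx : x ∈ M), g x = f ⟨x, hx⟩) ∧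
      ∀ e : ε, -1 < g (Pi.single e 1) := by
  obtain ⟨h, hh⟩ := (Module.Baer.of_divisible ℝ).extension_property_addMonoidHom M.subtype
    M.subtype_injective f
  have hfh : ∀ x (hx : x ∈ M), f ⟨x, hx⟩ = h x := fun x hx => by rw [← hh]; rfl
  obtain ⟨l, hl, hpos⟩ := exists_mem_cycleAnnihilator_forall_pos_add (s := s) (t := t)
    (u := fun e => h (Pi.single e 1) + 1) fun k c hc => by
      have hC := hf _ (hM ▸ AddSubgroup.subset_closure ⟨k, c, hc, rfl⟩) k c hc rfl
      rw [hfh, cycChi_eq_sum_single hc.1, map_sum] at hC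
      simp only [sum_add_distrib, sum_const, card_univ, Fintype.card_fin, nsmul_eq_mul, mul_one]
      push_cast
      linarith
  let δ : (ε → ℤ) →+ ℝ := ((Pi.basisFun ℤ ε).constr ℤ l).toAddMonoidHom
  have hδ : ∀ e, δ (Pi.single e 1) = l e := fun e => by simp [δ, Pi.single_apply]
  have hMδ : M ≤ δ.ker := hM ▸ (AddSubgroup.closure_le _).2 fun _ ⟨k, c, hc, hx⟩ => by
    simp [hx, cycChi_eq_sum_single hc.1, hδ, hl k c hc]
  refine ⟨h + δ, fun x hx => ?_, fun e => ?_⟩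
  · rw [AddMonoidHom.add_apply, hMδ hx, add_zero, hfh]
  · rw [AddMonoidHom.add_apply, hδ]
    linarith [hpos e]
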